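/- arXiv:2103.15651 — 2 statements merged into one kernel-verified Lean document; each statement's English description precedes it below -/
import Mathlib

section
/- The congruence ∼_A associated with a two-way automaton with state set Q has finite index, bounded by 2^(4|Q|²). -/
/-- A two-way automaton: deterministic transition function giving next state
and a head move in `{-1, 0, +1}`. -/
structure TwoWay (Q A : Type) where
  δ : Q → A → Q × ℤ
  move : ∀ q a, (δ q a).2 = -1 ∨ (δ q a).2 = 0 ∨ (δ q a).2 = 1

/-- One step of the two-way automaton on word `w`; configurations are
(state, position), positions `1..|w|` carry letters, `0` is the left exit,
`|w|+1` the right exit. -/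
def TwoWay.step {Q A : Type} (M : TwoWay Q A) (w : List A) (c c' : Q × ℤ) : Prop :=
  1 ≤ c.2 ∧ ∃ a, w[(c.2 - 1).toNat]? = some a ∧
    c'.1 = (M.δ c.1 a).1 ∧ c'.2 = c.2 + (M.δ c.1 a).2

def TwoWay.reach {Q A : Type} (M : TwoWay Q A) (w : List A) : Q × ℤ → Q × ℤ → Prop :=
  Relation.ReflTransGen (M.step w)

/-- Left-to-left behavior: runs starting at the first position and leaving on the left. -/
def TwoWay.bhLL {Q A : Type} (M : TwoWay Q A) (w : List A) : Set (Q × Q) :=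
  {pq | M.reach w (pq.1, 1) (pq.2, 0)}

/-- Left-to-right behavior. -/
def TwoWay.bhLR {Q A : Type} (M : TwoWay Q A) (w : List A) : Set (Q × Q) :=
  {pq | M.reach w (pq.1, 1) (pq.2, (w.length : ℤ) + 1)}

/-- Right-to-left behavior. -/
def TwoWay.bhRL {Q A : Type} (M : TwoWay Q A) (w : List A) : Set (Q × Q) :=
  {pq | M.reach w (pq.1, (w.length : ℤ)) (pq.2, 0)}

/-- Right-to-right behavior. -/
def TwoWay.bhRR {Q A : Type} (M : TwoWay Q A) (w : List A) : Set (Q × Q) :=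
  {pq | M.reach w (pq.1, (w.length : ℤ)) (pq.2, (w.length : ℤ) + 1)}

/-- `u ∼_A v`: all four behaviors coincide. -/
def TwoWay.equiv {Q A : Type} (M : TwoWay Q A) (u v : List A) : Prop :=
  M.bhLL u = M.bhLL v ∧ M.bhLR u = M.bhLR v ∧ M.bhRL u = M.bhRL v ∧ M.bhRR u = M.bhRR v

/-- The setoid given by `∼_A`. -/
def TwoWay.setoid {Q A : Type} (M : TwoWay Q A) : Setoid (List A) :=
  ⟨M.equiv,
   ⟨fun _ => ⟨rfl, rfl, rfl, rfl⟩,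
    fun h => ⟨h.1.symm, h.2.1.symm, h.2.2.1.symm, h.2.2.2.symm⟩,
    fun h h' => ⟨h.1.trans h'.1, h.2.1.trans h'.2.1, h.2.2.1.trans h'.2.2.1,
      h.2.2.2.trans h'.2.2.2⟩⟩⟩

/-! Each class of `∼_A` is determined by the quadruple of behaviors of any of its words, which
is a quadruple of relations on `Q`; there are `(2 ^ |Q|²) ^ 4` of those. -/

theorem Setoid.finite_quotient_ker_and_natCard_le {α β : Type*} [Finite β] (f : α → β) :
    Finite (Quotient (Setoid.ker f)) ∧ Nat.card (Quotient (Setoid.ker f)) ≤ Nat.card β :=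
  ⟨Finite.of_injective _ (Setoid.kerLift_injective f),
    Nat.card_le_card_of_injective _ (Setoid.kerLift_injective f)⟩

theorem Nat.card_set_prod_set_pow_four (α : Type*) [Finite α] :
    Nat.card (Set α × Set α × Set α × Set α) = 2 ^ (4 * Nat.card α) := by
  classical
  have : Fintype α := Fintype.ofFinite α
  rw [Nat.card_eq_fintype_card, Fintype.card_prod, Fintype.card_prod, Fintype.card_prod,
    Fintype.card_set, Nat.card_eq_fintype_card]
  ring

namespace TwoWay

variable {Q A : Type} (M : TwoWay Q A)

def behavior (w : List A) : Set (Q × Q) × Set (Q × Q) × Set (Q × Q) × Set (Q × Q) :=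
  (M.bhLL w, M.bhLR w, M.bhRL w, M.bhRR w)

theorem setoid_eq_ker_behavior : M.setoid = Setoid.ker M.behavior := by
  ext u v
  simp only [Setoid.ker_def, behavior, Prod.mk.injEq]
  exact Iff.rfl

end TwoWay

/-- `∼_A` has finite index, bounded by `2 ^ (4 |Q|²)`. -/
theorem stmt_1 {Q A : Type} [Fintype Q] (M : TwoWay Q A) :
    Finite (Quotient M.setoid) ∧
      Nat.card (Quotient M.setoid) ≤ 2 ^ (4 * Fintype.card Q ^ 2) := by
  rw [M.setoid_eq_ker_behavior, sq, ← Fintype.card_prod, ← Nat.card_eq_fintype_card,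
    ← Nat.card_set_prod_set_pow_four]
  exact Setoid.finite_quotient_ker_and_natCard_le M.behavior
end

section
/- For any two-way automaton and any words u, v, the left-to-right behavior of the concatenation satisfies bh_ℓr(uv) = bh_ℓr(u) ∘ (bh_ℓℓ(v) ∘ bh_rr(u))* ∘ bh_ℓr(v), where ∘ denotes relational composition and * the reflexive-transitive closure of a relation on states. -/
/-- Relational composition (first `R`, then `S`). -/
def rcomp {Q : Type} (R S : Set (Q × Q)) : Set (Q × Q) :=
  {pq | ∃ r, (pq.1, r) ∈ R ∧ (r, pq.2) ∈ S}

/-- Reflexive-transitive closure of a relation on states. -/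
def rstar {Q : Type} (R : Set (Q × Q)) : Set (Q × Q) :=
  {pq | Relation.ReflTransGen (fun a b => (a, b) ∈ R) pq.1 pq.2}

theorem subset_rcomp_rstar {Q : Type} (R S : Set (Q × Q)) : S ⊆ rcomp (rstar R) S :=
  fun pq h => ⟨pq.1, Relation.ReflTransGen.refl, h⟩

theorem rcomp_rcomp_rstar_subset {Q : Type} (R S : Set (Q × Q)) :
    rcomp R (rcomp (rstar R) S) ⊆ rcomp (rstar R) S :=
  fun _ ⟨_, hR, s, hs, hS⟩ => ⟨s, Relation.ReflTransGen.head hR hs, hS⟩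

namespace TwoWay

variable {Q A : Type} (M : TwoWay Q A)

theorem step_position {w : List A} {c c' : Q × ℤ} (h : M.step w c c') :
    1 ≤ c.2 ∧ c.2 ≤ w.length ∧ (c'.2 = c.2 - 1 ∨ c'.2 = c.2 ∨ c'.2 = c.2 + 1) := by
  obtain ⟨h1, a, ha, -, hmove⟩ := h
  have := (List.getElem?_eq_some_iff.mp ha).1
  refine ⟨h1, by omega, ?_⟩
  rcases M.move c.1 a with h | h | h <;> omega

theorem eq_of_reach_nil {c d : Q × ℤ} (h : M.reach [] c d) : c = d := by
  induction h with
  | refl => rfl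
  | tail _ hstep =>
    have := M.step_position hstep
    simp only [List.length_nil, Nat.cast_zero] at this
    omega

theorem step_append_left_iff {u v : List A} {c c' : Q × ℤ} (hc : c.2 ≤ u.length) :
    M.step (u ++ v) c c' ↔ M.step u c c' := by
  constructor <;> rintro ⟨h1, a, ha, hnext⟩ <;> refine ⟨h1, a, ?_, hnext⟩
  · rwa [List.getElem?_append_left (by omega)] at ha
  · rwa [List.getElem?_append_left (by omega)]

theorem step_append_right_iff {u v : List A} {c c' : Q × ℤ} (hc : u.length < c.2) :
    M.step (u ++ v) c c' ↔ M.step v (c.1, c.2 - u.length) (c'.1, c'.2 - u.length) := by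
  have hidx : (c.2 - u.length - 1).toNat = (c.2 - 1).toNat - u.length := by omega
  have hcell : (u ++ v)[(c.2 - 1).toNat]? = v[(c.2 - 1).toNat - u.length]? :=
    List.getElem?_append_right (by omega)
  simp only [step, hidx, hcell]
  constructor <;> rintro ⟨-, a, ha, hq, hpos⟩ <;> exact ⟨by omega, a, ha, hq, by omega⟩

theorem reach_append_left {u v : List A} {c d : Q × ℤ} (h : M.reach u c d) :
    M.reach (u ++ v) c d :=
  Relation.ReflTransGen.mono
    (fun _ _ hs => (M.step_append_left_iff (M.step_position hs).2.1).2 hs) _ _ h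

theorem reach_append_right {u v : List A} {p q : Q} {i j : ℤ} (h : M.reach v (p, i) (q, j)) :
    M.reach (u ++ v) (p, u.length + i) (q, u.length + j) :=
  Relation.ReflTransGen.lift (fun c : Q × ℤ => (c.1, (u.length : ℤ) + c.2)) (fun _ _ hs =>
    (M.step_append_right_iff (by have := (M.step_position hs).1; dsimp; omega)).2
      (by simpa using hs)) _ _ h

theorem rcomp_subset_bhLR_append (u v : List A) :
    rcomp (M.bhLR u) (rcomp (rstar (rcomp (M.bhLL v) (M.bhRR u))) (M.bhLR v)) ⊆
      M.bhLR (u ++ v) := by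
  rintro ⟨p, q⟩ ⟨r, hpr, s, hrs, hsq⟩
  have hloop : M.reach (u ++ v) (r, u.length + 1) (s, u.length + 1) := by
    refine Relation.ReflTransGen.lift' (fun x : Q => (x, (u.length : ℤ) + 1))
      (fun x y ⟨t, hxt, hty⟩ => ?_) _ _ hrs
    have hin : M.reach (u ++ v) (x, u.length + 1) (t, u.length + 0) := M.reach_append_right hxt
    rw [add_zero] at hin
    exact hin.trans (M.reach_append_left hty)
  have hlen : ((u ++ v).length : ℤ) + 1 = u.length + (v.length + 1) := by
    simp only [List.length_append, Nat.cast_add]; ring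
  show M.reach (u ++ v) (p, 1) (q, ((u ++ v).length : ℤ) + 1)
  rw [hlen]
  exact (M.reach_append_left hpr).trans (hloop.trans (M.reach_append_right hsq))

def SplitExit (u v : List A) (q : Q) (c : Q × ℤ) : Prop :=
  (c.2 ≤ u.length ∧ ∃ r, M.reach u c (r, u.length + 1) ∧
      (r, q) ∈ rcomp (rstar (rcomp (M.bhLL v) (M.bhRR u))) (M.bhLR v)) ∨
  (u.length < c.2 ∧
    (M.reach v (c.1, c.2 - u.length) (q, v.length + 1) ∨
      ∃ r, M.reach v (c.1, c.2 - u.length) (r, 0) ∧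
        (r, q) ∈ rcomp (M.bhRR u) (rcomp (rstar (rcomp (M.bhLL v) (M.bhRR u))) (M.bhLR v))))

variable {M}

theorem splitExit_exit (u v : List A) (q : Q) :
    M.SplitExit u v q (q, ((u ++ v).length : ℤ) + 1) := by
  have hpos : ((u ++ v).length : ℤ) + 1 - u.length = v.length + 1 := by
    simp only [List.length_append, Nat.cast_add]; ring
  refine Or.inr ⟨by omega, Or.inl ?_⟩
  rw [hpos]
  exact Relation.ReflTransGen.refl

theorem mem_of_splitExit_border {u v : List A} {q r : Q}
    (h : M.SplitExit u v q (r, u.length + 1)) :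
    (r, q) ∈ rcomp (rstar (rcomp (M.bhLL v) (M.bhRR u))) (M.bhLR v) := by
  rcases h with ⟨hpos, -⟩ | ⟨-, hv⟩
  · simp at hpos
  simp only [add_sub_cancel_left] at hv
  rcases hv with hrq | ⟨t, hrt, s, hts, hsq⟩
  · exact subset_rcomp_rstar _ _ hrq
  · exact rcomp_rcomp_rstar_subset _ _ ⟨s, ⟨t, hrt, hts⟩, hsq⟩

theorem SplitExit.of_step {u v : List A} {q : Q} {c c' : Q × ℤ} (hs : M.step (u ++ v) c c')
    (h : M.SplitExit u v q c') : M.SplitExit u v q c := by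
  obtain ⟨-, -, hmove⟩ := M.step_position hs
  rcases le_or_gt c.2 u.length with hc | hc
  · have hsu : M.step u c c' := (M.step_append_left_iff hc).1 hs
    rcases le_or_gt c'.2 u.length with hc' | hc'
    · rcases h with ⟨-, r, hr, hrq⟩ | ⟨hc'', -⟩
      · exact Or.inl ⟨hc, r, Relation.ReflTransGen.head hsu hr, hrq⟩
      · omega
    · have hborder : c' = (c'.1, (u.length : ℤ) + 1) := Prod.ext rfl (by omega)
      refine Or.inl ⟨hc, c'.1, hborder ▸ Relation.ReflTransGen.single hsu, ?_⟩
      exact mem_of_splitExit_border (hborder ▸ h)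
  · have hsv := (M.step_append_right_iff hc).1 hs
    rcases le_or_gt c'.2 u.length with hc' | hc'
    · rcases h with ⟨-, r, hr, hrq⟩ | ⟨hc'', -⟩
      · have hborder : c' = (c'.1, (u.length : ℤ)) := Prod.ext rfl (by omega)
        have hexit : c'.2 - u.length = 0 := by omega
        rw [hexit] at hsv
        exact Or.inr
          ⟨hc, Or.inr ⟨c'.1, Relation.ReflTransGen.single hsv, r, hborder ▸ hr, hrq⟩⟩
      · omega
    · rcases h with ⟨hc'', -⟩ | ⟨-, hv | ⟨r, hr, hrq⟩⟩
      · omega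
      · exact Or.inr ⟨hc, Or.inl (Relation.ReflTransGen.head hsv hv)⟩
      · exact Or.inr ⟨hc, Or.inr ⟨r, Relation.ReflTransGen.head hsv hr, hrq⟩⟩

theorem splitExit_of_reach {u v : List A} {q : Q} {c : Q × ℤ}
    (h : M.reach (u ++ v) c (q, ((u ++ v).length : ℤ) + 1)) : M.SplitExit u v q c := by
  induction h using Relation.ReflTransGen.head_induction_on with
  | refl => exact splitExit_exit u v q
  | head hs _ ih => exact ih.of_step hs

variable (M)

theorem bhLR_append_subset (u v : List A) :
    M.bhLR (u ++ v) ⊆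
      rcomp (M.bhLR u) (rcomp (rstar (rcomp (M.bhLL v) (M.bhRR u))) (M.bhLR v)) := by
  rintro ⟨p, q⟩ h
  rcases splitExit_of_reach h with ⟨-, r, hpr, hrq⟩ | ⟨hu, hv⟩
  · exact ⟨r, hpr, hrq⟩
  obtain rfl : u = [] := List.eq_nil_of_length_eq_zero (by dsimp only at hu; omega)
  simp only [List.length_nil, Nat.cast_zero, sub_zero] at hv
  rcases hv with hpq | ⟨r, -, s, hrs, -⟩
  · refine ⟨p, ?_, subset_rcomp_rstar _ _ hpq⟩
    show M.reach [] (p, 1) (p, (([] : List A).length : ℤ) + 1)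
    simp only [List.length_nil, Nat.cast_zero, zero_add]
    exact Relation.ReflTransGen.refl
  · simpa using congrArg Prod.snd (M.eq_of_reach_nil hrs)

end TwoWay

/-- `bh_ℓr(uv) = bh_ℓr(u) (bh_ℓℓ(v) bh_rr(u))* bh_ℓr(v)`. -/
theorem stmt_2 {Q A : Type} (M : TwoWay Q A) (u v : List A) :
    M.bhLR (u ++ v) =
      rcomp (M.bhLR u) (rcomp (rstar (rcomp (M.bhLL v) (M.bhRR u))) (M.bhLR v)) :=
  (M.bhLR_append_subset u v).antisymm (M.rcomp_subset_bhLR_append u v)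
end
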